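/- arXiv:2601.22687 — 3 statements merged into one kernel-verified Lean document; each statement's English description precedes it below -/
import Mathlib

section
/- Let H be a finite-dimensional real inner product space, ν₁ : H → ℝ differentiable, ν₂ : H → ℝ μ₂-strongly convex with μ₂ ≥ 0, ν₃ : H → ℝ differentiable, and Δt > 0. Then for any Uⁿ ∈ H, there exists a unique U ∈ H satisfying the implicit equation (U − Uⁿ)/Δt = −(∇ν₁(Uⁿ) + ∇ν₂(U) − ∇ν₃(Uⁿ)). -/
open RealInnerProductSpace

section Aux

variable {H : Type*} [NormedAddCommGroup H] [InnerProductSpace ℝ H] [CompleteSpace H]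

private lemma hasGradientAt_half_normsq (c x : H) :
    HasGradientAt (fun y => ‖y - c‖ ^ 2 / 2) (x - c) x := by
  rw [hasGradientAt_iff_hasFDerivAt]
  have hid : HasFDerivAt (fun y : H => y - c) (ContinuousLinearMap.id ℝ H) x :=
    (hasFDerivAt_id x).sub_const c
  have h := (hid.inner ℝ hid).const_mul (2⁻¹:ℝ)
  convert h using 1
  · rfl
  · funext y
    rw [← real_inner_self_eq_norm_sq]
    ring
  · ext w
    simp only [ContinuousLinearMap.comp_apply, ContinuousLinearMap.prod_apply,
      ContinuousLinearMap.id_apply, fderivInnerCLM_apply, ContinuousLinearMap.coe_smul',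
      Pi.smul_apply, smul_eq_mul, InnerProductSpace.toDual_apply_apply]
    rw [real_inner_comm w (x - c)]
    ring

end Aux

/-- Unique solvability of one step of the smooth-convex-concave splitting scheme. -/
theorem splitting_scheme_unique_solvability {H : Type*} [NormedAddCommGroup H]
    [InnerProductSpace ℝ H] [FiniteDimensional ℝ H]
    (ν₁ ν₂ ν₃ : H → ℝ) (G₁ G₂ G₃ : H → H) (μ₂ Δt : ℝ)
    (hμ₂ : 0 ≤ μ₂) (hΔt : 0 < Δt)
    (hgrad₁ : ∀ x : H, HasGradientAt ν₁ (G₁ x) x)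
    (hgrad₂ : ∀ x : H, HasGradientAt ν₂ (G₂ x) x)
    (hgrad₃ : ∀ x : H, HasGradientAt ν₃ (G₃ x) x)
    (hsc₂ : ∀ f g : H, ν₂ f + ⟪G₂ f, g - f⟫ + μ₂ / 2 * ‖g - f‖ ^ 2 ≤ ν₂ g)
    (Un : H) :
    ∃! U : H, Δt⁻¹ • (U - Un) = -(G₁ Un + G₂ U - G₃ Un) := by
  -- Monotonicity of G₂
  have hmono : ∀ y z : H, 0 ≤ ⟪G₂ y - G₂ z, y - z⟫ := by
    intro y z
    have h1 := hsc₂ y z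
    have h2 := hsc₂ z y
    have hn1 : 0 ≤ μ₂ / 2 * ‖z - y‖ ^ 2 := by positivity
    have hn2 : 0 ≤ μ₂ / 2 * ‖y - z‖ ^ 2 := by positivity
    have := add_le_add h1 h2
    rw [inner_sub_left]
    have hswap : ⟪G₂ z, y - z⟫ = - ⟪G₂ z, z - y⟫ := by
      rw [← inner_neg_right]; congr 1; abel
    have hswap' : ⟪G₂ y, z - y⟫ = - ⟪G₂ y, y - z⟫ := by
      rw [← inner_neg_right]; congr 1; abel
    nlinarith [h1, h2, hn1, hn2]
  -- The equation is equivalent to vanishing of the gradient of an auxiliary functional.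
  set c : H := Un - Δt • (G₁ Un - G₃ Un) with hc
  have hequiv : ∀ U : H,
      (Δt⁻¹ • (U - Un) = -(G₁ Un + G₂ U - G₃ Un)) ↔ Δt • G₂ U + (U - c) = 0 := by
    intro U
    rw [hc]
    constructor
    · intro h
      have h' : U - Un = Δt • (-(G₁ Un + G₂ U - G₃ Un)) := by
        rw [← h, smul_smul, mul_inv_cancel₀ hΔt.ne', one_smul]
      linear_combination (norm := module) h'
    · intro h
      have h' : U - Un = Δt • (-(G₁ Un + G₂ U - G₃ Un)) := by
        linear_combination (norm := module) h
      rw [h', smul_smul, inv_mul_cancel₀ hΔt.ne', one_smul]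
  -- Auxiliary functional
  set φ : H → ℝ := fun U => Δt * ν₂ U + ‖U - c‖ ^ 2 / 2 with hφ
  have hφgrad : ∀ x : H, HasGradientAt φ (Δt • G₂ x + (x - c)) x := by
    intro x
    rw [hasGradientAt_iff_hasFDerivAt] at *
    have h2 := ((hgrad₂ x).hasFDerivAt.const_mul Δt)
    have h3 := (hasGradientAt_half_normsq c x).hasFDerivAt
    have := h2.add h3
    convert this using 1
    · rfl
    · rfl
    · rfl
    ext w
    simp [InnerProductSpace.toDual_apply_apply, inner_add_left, real_inner_smul_left]
  -- Continuity and coercivity of φ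
  have hφcont : Continuous φ := by
    exact continuous_iff_continuousAt.mpr fun x =>
      (hφgrad x).hasFDerivAt.differentiableAt.continuousAt
  have hcoer : Filter.Tendsto φ (Filter.cocompact H) Filter.atTop := by
    -- lower bound: φ U ≥ q ‖U‖ with q t = Δt * ν₂ 0 - Δt*‖G₂ 0‖*t + (t - ‖c‖)^2/2
    set q : ℝ → ℝ := fun t => Δt * ν₂ 0 - Δt * ‖G₂ 0‖ * t + (t - ‖c‖) ^ 2 / 2 with hq
    have hqtend : Filter.Tendsto q Filter.atTop Filter.atTop := by
      have h1 : Filter.Tendsto (fun t : ℝ => (t - ‖c‖) ^ 2 / 2 - Δt * ‖G₂ 0‖ * t)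
          Filter.atTop Filter.atTop := by
        have : ∀ᶠ t : ℝ in Filter.atTop,
            t * (t / 4) ≤ (t - ‖c‖) ^ 2 / 2 - Δt * ‖G₂ 0‖ * t := by
          filter_upwards [Filter.eventually_ge_atTop (4 * (‖c‖ + Δt * ‖G₂ 0‖) + 4 * ‖c‖)]
            with t ht
          have ht0 : (0:ℝ) ≤ t := by
            nlinarith [norm_nonneg c, mul_nonneg hΔt.le (norm_nonneg (G₂ 0))]
          nlinarith [mul_le_mul_of_nonneg_right ht ht0, sq_nonneg ‖c‖,
            norm_nonneg c, mul_nonneg hΔt.le (norm_nonneg (G₂ 0))]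
        refine Filter.tendsto_atTop_mono' _ this ?_
        exact Filter.tendsto_id.atTop_mul_atTop₀
          (Filter.tendsto_id.atTop_div_const (by norm_num))
      have := h1.atTop_add tendsto_const_nhds (C := Δt * ν₂ 0)
      refine this.congr fun t => by ring
    have hlb : ∀ U : H, q ‖U‖ ≤ φ U := by
      intro U
      have h0 := hsc₂ 0 U
      simp only [sub_zero] at h0
      have hν : ν₂ 0 - ‖G₂ 0‖ * ‖U‖ ≤ ν₂ U := by
        have hcs : -(‖G₂ 0‖ * ‖U‖) ≤ ⟪G₂ 0, U⟫ := by
          have := abs_real_inner_le_norm (G₂ 0) U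
          linarith [neg_abs_le ⟪G₂ 0, U⟫]
        nlinarith [hμ₂, sq_nonneg ‖U‖]
      have hns : (‖U‖ - ‖c‖) ^ 2 ≤ ‖U - c‖ ^ 2 := by
        have h := abs_norm_sub_norm_le U c
        have := sq_abs (‖U‖ - ‖c‖)
        nlinarith [abs_nonneg (‖U‖ - ‖c‖)]
      have : Δt * (ν₂ 0 - ‖G₂ 0‖ * ‖U‖) ≤ Δt * ν₂ U :=
        mul_le_mul_of_nonneg_left hν hΔt.le
      simp only [hφ, hq]
      nlinarith
    exact Filter.tendsto_atTop_mono hlb (hqtend.comp tendsto_norm_cocompact_atTop)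
  -- Existence of a minimizer
  obtain ⟨x, hx⟩ := hφcont.exists_forall_le hcoer
  have hmin : IsLocalMin φ x := (isMinOn_univ_iff.mpr hx).isLocalMin Filter.univ_mem
  have hfzero : fderiv ℝ φ x = 0 := hmin.fderiv_eq_zero
  have hfd := (hφgrad x).hasFDerivAt
  have hzero : Δt • G₂ x + (x - c) = 0 := by
    have := hfd.fderiv
    rw [hfzero] at this
    have h0 : InnerProductSpace.toDual ℝ H (Δt • G₂ x + (x - c)) =
        InnerProductSpace.toDual ℝ H 0 := by rw [map_zero]; exact this.symm
    exact (InnerProductSpace.toDual ℝ H).injective h0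
  refine ⟨x, (hequiv x).mpr hzero, ?_⟩
  -- Uniqueness
  intro y hy
  have hyz : Δt • G₂ y + (y - c) = 0 := (hequiv y).mp hy
  have hsub : (y - x) = -(Δt • (G₂ y - G₂ x)) := by
    have := sub_eq_zero.mpr (hyz.trans hzero.symm)
    rw [smul_sub]
    linear_combination (norm := module) this
  have hnorm : ‖y - x‖ ^ 2 ≤ 0 := by
    have h1 : (‖y - x‖ : ℝ) ^ 2 = ⟪y - x, y - x⟫ := (real_inner_self_eq_norm_sq _).symm
    rw [h1]
    calc ⟪y - x, y - x⟫ = ⟪-(Δt • (G₂ y - G₂ x)), y - x⟫ := by rw [← hsub]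
      _ = -(Δt * ⟪G₂ y - G₂ x, y - x⟫) := by
          rw [inner_neg_left, real_inner_smul_left]
      _ ≤ 0 := by
          have := hmono y x
          nlinarith
  have : y - x = 0 := by
    have := norm_nonneg (y - x)
    have h2 : ‖y - x‖ = 0 := by nlinarith
    exact norm_eq_zero.mp h2
  exact sub_eq_zero.mp this
end

section
/- Let M ≥ 0 and ζ ≤ M², and let ψ be the truncated quartic: ψ(U) = (3M²/2)U² + 2M³U + (3/4)M⁴ for U < −M, ψ(U) = (1/4)U⁴ for −M ≤ U ≤ M, and ψ(U) = (3M²/2)U² − 2M³U + (3/4)M⁴ for U > M. Then ψ(U) ≥ (ζ/2)U² − ζ²/4 for all U ∈ ℝ. -/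
/-!
Each of the three pieces of `ψ` lies above the parabola `(ζ/2)U² − ζ²/4` on the whole real line,
not only on its own interval. For the quartic piece this is `¼U⁴ − (ζ/2)U² + ζ²/4 = ¼(U² − ζ)²`.
For the left quadratic piece, with `s = M² − ζ ≥ 0` the difference is the sum of squares
`(M(U + M) − s/2)² + (s/2)(U + M)²`; the right piece is its mirror image under `M ↦ −M`.
-/

noncomputable def psi (M U : ℝ) : ℝ :=
  if U < -M then 3 * M ^ 2 / 2 * U ^ 2 + 2 * M ^ 3 * U + 3 / 4 * M ^ 4
  else if U ≤ M then 1 / 4 * U ^ 4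
  else 3 * M ^ 2 / 2 * U ^ 2 - 2 * M ^ 3 * U + 3 / 4 * M ^ 4

theorem parabola_le_quartic (ζ U : ℝ) : ζ / 2 * U ^ 2 - ζ ^ 2 / 4 ≤ 1 / 4 * U ^ 4 := by
  nlinarith [sq_nonneg (U ^ 2 - ζ)]

theorem parabola_le_left_quadratic {M ζ : ℝ} (hζ : ζ ≤ M ^ 2) (U : ℝ) :
    ζ / 2 * U ^ 2 - ζ ^ 2 / 4 ≤ 3 * M ^ 2 / 2 * U ^ 2 + 2 * M ^ 3 * U + 3 / 4 * M ^ 4 := by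
  set s := M ^ 2 - ζ
  have hs : 0 ≤ s := sub_nonneg.mpr hζ
  have sos : 3 * M ^ 2 / 2 * U ^ 2 + 2 * M ^ 3 * U + 3 / 4 * M ^ 4 - (ζ / 2 * U ^ 2 - ζ ^ 2 / 4)
      = (M * (U + M) - s / 2) ^ 2 + s / 2 * (U + M) ^ 2 := by
    ring
  linarith [sq_nonneg (M * (U + M) - s / 2), mul_nonneg hs (sq_nonneg (U + M))]

theorem parabola_le_right_quadratic {M ζ : ℝ} (hζ : ζ ≤ M ^ 2) (U : ℝ) :
    ζ / 2 * U ^ 2 - ζ ^ 2 / 4 ≤ 3 * M ^ 2 / 2 * U ^ 2 - 2 * M ^ 3 * U + 3 / 4 * M ^ 4 := by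
  have h := parabola_le_left_quadratic (M := -M) (ζ := ζ) (by rwa [neg_sq]) U
  convert h using 2 <;> ring

theorem psi_lower_bound_general (M ζ : ℝ) (hζ : ζ ≤ M ^ 2) :
    ∀ U : ℝ, ζ / 2 * U ^ 2 - ζ ^ 2 / 4 ≤ psi M U := by
  intro U
  unfold psi
  split_ifs
  · exact parabola_le_left_quadratic hζ U
  · exact parabola_le_quartic ζ U
  · exact parabola_le_right_quadratic hζ U

/-- If `ζ ≤ M²`, the truncated quartic satisfies `ψ(U) ≥ (ζ/2)U² − ζ²/4`. -/
theorem psi_lower_bound (M ζ : ℝ) (hM : 0 ≤ M) (hζ : ζ ≤ M ^ 2) :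
    ∀ U : ℝ, ζ / 2 * U ^ 2 - ζ ^ 2 / 4 ≤ psi M U :=
  psi_lower_bound_general M ζ hζ
end

section
/- Let H be a finite-dimensional real inner product space, let ν₁ be L-smooth, ν₂ be μ₂-strongly convex (μ₂ ≥ 0), ν₃ be μ₃-strongly convex, with L > μ₂ + μ₃, and assume the sequence (Uⁿ) satisfies the splitting scheme (Uⁿ⁺¹ − Uⁿ)/Δt = −(∇ν₁(Uⁿ) + ∇ν₂(Uⁿ⁺¹) − ∇ν₃(Uⁿ)) with 0 < Δt < 2/(L − μ₂ − μ₃). If ν_total(Uⁿ⁺¹) = ν_total(Uⁿ) for some n, then Uⁿ⁺¹ = Uⁿ, i.e., Uⁿ is a fixed point: ∇ν₁(Uⁿ) + ∇ν₂(Uⁿ) − ∇ν₃(Uⁿ) = 0. -/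
open RealInnerProductSpace

lemma descent_lemma {H : Type*} [NormedAddCommGroup H] [InnerProductSpace ℝ H] [CompleteSpace H]
    (ν₁ : H → ℝ) (G₁ : H → H) (L : ℝ) (hL : 0 ≤ L)
    (hgrad₁ : ∀ x : H, HasGradientAt ν₁ (G₁ x) x)
    (hlip₁ : ∀ f g : H, ‖G₁ f - G₁ g‖ ≤ L * ‖f - g‖)
    (x d : H) :
    ν₁ (x + d) ≤ ν₁ x + ⟪G₁ x, d⟫ + L / 2 * ‖d‖ ^ 2 := by
  set ψ : ℝ → ℝ := fun t => ν₁ (x + t • d) - t * ⟪G₁ x, d⟫ - L * ‖d‖ ^ 2 * t ^ 2 / 2 with hψ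
  have hline : ∀ t : ℝ, HasDerivAt (fun t : ℝ => x + t • d) d t := by
    intro t
    simpa using ((hasDerivAt_id t).smul_const d).const_add x
  have hderiv : ∀ t : ℝ, HasDerivAt ψ
      (⟪G₁ (x + t • d), d⟫ - ⟪G₁ x, d⟫ - L * ‖d‖ ^ 2 * t) t := by
    intro t
    have h1 : HasDerivAt (fun t : ℝ => ν₁ (x + t • d)) ⟪G₁ (x + t • d), d⟫ t := by
      have hf := (hasGradientAt_iff_hasFDerivAt.mp (hgrad₁ (x + t • d)))
      have := hf.comp_hasDerivAt t (hline t)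
      simp at this
      exact this
    have h2 : HasDerivAt (fun t : ℝ => t * ⟪G₁ x, d⟫) ⟪G₁ x, d⟫ t := by
      simpa using (hasDerivAt_id t).mul_const (⟪G₁ x, d⟫)
    have h3 : HasDerivAt (fun t : ℝ => L * ‖d‖ ^ 2 * t ^ 2 / 2) (L * ‖d‖ ^ 2 * t) t := by
      have := ((hasDerivAt_pow 2 t).const_mul (L * ‖d‖ ^ 2)).div_const 2
      refine this.congr_deriv ?_
      norm_num
      ring
    exact (h1.sub h2).sub h3
  have hanti : AntitoneOn ψ (Set.Icc 0 1) := by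
    apply AntitoneOn.mono (antitoneOn_of_deriv_nonpos (convex_Icc 0 1) ?cont ?diff ?nonpos)
    · exact le_refl _
    case cont =>
      exact fun t _ => ((hderiv t).differentiableAt.continuousAt).continuousWithinAt
    case diff =>
      intro t ht
      exact (hderiv t).differentiableAt.differentiableWithinAt
    case nonpos =>
      intro t ht
      rw [interior_Icc] at ht
      rw [(hderiv t).deriv]
      have hcs : ⟪G₁ (x + t • d) - G₁ x, d⟫ ≤ ‖G₁ (x + t • d) - G₁ x‖ * ‖d‖ :=
        real_inner_le_norm _ _
      have hl : ‖G₁ (x + t • d) - G₁ x‖ ≤ L * (t * ‖d‖) := by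
        have := hlip₁ (x + t • d) x
        simpa [norm_smul, abs_of_pos ht.1] using this
      have : ⟪G₁ (x + t • d), d⟫ - ⟪G₁ x, d⟫ ≤ L * ‖d‖ ^ 2 * t := by
        rw [← inner_sub_left]
        calc ⟪G₁ (x + t • d) - G₁ x, d⟫ ≤ ‖G₁ (x + t • d) - G₁ x‖ * ‖d‖ := hcs
          _ ≤ L * (t * ‖d‖) * ‖d‖ := by
              apply mul_le_mul_of_nonneg_right hl (norm_nonneg _)
          _ = L * ‖d‖ ^ 2 * t := by ring
      linarith
  have := hanti (Set.mem_Icc.mpr ⟨le_refl 0, zero_le_one⟩)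
    (Set.mem_Icc.mpr ⟨zero_le_one, le_refl 1⟩) zero_le_one
  simp only [hψ] at this
  simp only [one_smul, zero_smul, add_zero] at this
  nlinarith [this]

/-- If the energy does not decrease over a step of the splitting scheme (with admissible
step size), then the step is stationary: `Uⁿ⁺¹ = Uⁿ` and `Uⁿ` is a fixed point. -/
theorem splitting_scheme_stationarity {H : Type*} [NormedAddCommGroup H]
    [InnerProductSpace ℝ H] [FiniteDimensional ℝ H]
    (ν₁ ν₂ ν₃ : H → ℝ) (G₁ G₂ G₃ : H → H) (L μ₂ μ₃ Δt : ℝ)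
    (hL : 0 < L) (hμ₂ : 0 ≤ μ₂) (hμ₃ : 0 ≤ μ₃)
    (hLμ : μ₂ + μ₃ < L) (hΔt : 0 < Δt) (hΔt' : Δt < 2 / (L - μ₂ - μ₃))
    (hgrad₁ : ∀ x : H, HasGradientAt ν₁ (G₁ x) x)
    (hlip₁ : ∀ f g : H, ‖G₁ f - G₁ g‖ ≤ L * ‖f - g‖)
    (hsc₂ : ∀ f g : H, ν₂ f + ⟪G₂ f, g - f⟫ + μ₂ / 2 * ‖g - f‖ ^ 2 ≤ ν₂ g)
    (hsc₃ : ∀ f g : H, ν₃ f + ⟪G₃ f, g - f⟫ + μ₃ / 2 * ‖g - f‖ ^ 2 ≤ ν₃ g)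
    (Un Un1 : H)
    (hscheme : Δt⁻¹ • (Un1 - Un) = -(G₁ Un + G₂ Un1 - G₃ Un))
    (henergy : ν₁ Un1 + ν₂ Un1 - ν₃ Un1 = ν₁ Un + ν₂ Un - ν₃ Un) :
    Un1 = Un ∧ G₁ Un + G₂ Un - G₃ Un = 0 := by
  set v : H := Un1 - Un with hv
  have h1 : ν₁ Un1 ≤ ν₁ Un + ⟪G₁ Un, v⟫ + L / 2 * ‖v‖ ^ 2 := by
    have := descent_lemma ν₁ G₁ L hL.le hgrad₁ hlip₁ Un v
    simpa [hv] using this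
  have h2 := hsc₂ Un1 Un
  have h3 := hsc₃ Un Un1
  have h2' : ⟪G₂ Un1, Un - Un1⟫ = -⟪G₂ Un1, v⟫ := by
    rw [hv, ← neg_sub, inner_neg_right]
  have hnorm : ‖Un - Un1‖ = ‖v‖ := by rw [hv, norm_sub_rev]
  rw [h2', hnorm] at h2
  have hinner : ⟪G₁ Un, v⟫ + ⟪G₂ Un1, v⟫ - ⟪G₃ Un, v⟫ = -(Δt⁻¹ * ‖v‖ ^ 2) := by
    have h := congrArg (fun w : H => (⟪w, v⟫ : ℝ)) hscheme
    simp only [real_inner_smul_left, inner_neg_left, inner_add_left, inner_sub_left,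
      real_inner_self_eq_norm_sq] at h
    linarith
  have hpos : 0 < L - μ₂ - μ₃ := by linarith
  have hcoef : (L - μ₂ - μ₃) / 2 < Δt⁻¹ := by
    have h := (inv_strictAnti₀ hΔt hΔt')
    rwa [inv_div] at h
  have hn0 : ‖v‖ ^ 2 = 0 := by
    nlinarith [sq_nonneg ‖v‖]
  have hveq : v = 0 := by
    have := pow_eq_zero_iff (n := 2) (by norm_num) |>.mp hn0
    exact norm_eq_zero.mp this
  have hUn : Un1 = Un := sub_eq_zero.mp hveq
  refine ⟨hUn, ?_⟩
  have := hscheme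
  rw [hUn, hveq] at this
  simp only [smul_zero] at this
  exact (neg_eq_zero.mp this.symm)
end
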